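/- Let E be a real inner product space, let ν ∈ E be a unit vector, let P : E → E be the orthogonal projection onto {x ∈ E : ⟪x, ν⟫ = 0}, let k ≥ 1, and let ω be an alternating k-linear form on E with values in ℝ. Then the normal part ω_⊥ = ω − ω ∘ P is the zero alternating form if and only if ω(ν, X₂,…,X_k) = 0 for all tangential vectors X₂,…,X_k ∈ E (i.e., if and only if the normal trace γ_ν ω vanishes). -/

import Mathlib

/-!
Write `x = P x + ⟪x, ν⟫ • ν` and replace the arguments of `ω` by their tangential parts one
slot at a time: by multilinearity each replacement only drops a term with `ν` in that slot.
Such terms vanish as soon as `ω (Fin.cons ν ·)` vanishes identically, and this follows from its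
vanishing on tangential vectors by the same replacement argument applied to `ω (Fin.cons ν ·)`,
where the dropped terms contain `ν` twice.
-/

open scoped RealInnerProductSpace

namespace MultilinearMap

variable {R M N ι : Type*} [CommSemiring R] [AddCommMonoid M] [Module R M]
  [AddCommMonoid N] [Module R N] [DecidableEq ι]
  (f : MultilinearMap R (fun _ : ι => M) N) {ν : M}

theorem map_update_apply_eq_of_map_update_eq_zero
    (hν : ∀ Y j, f (Function.update Y j ν) = 0) {P : M → M}
    (hP : ∀ x, ∃ c : R, P x + c • ν = x) (Y : ι → M) (j : ι) (x : M) :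
    f (Function.update Y j (P x)) = f (Function.update Y j x) := by
  obtain ⟨c, hc⟩ := hP x
  conv_rhs => rw [← hc, f.map_update_add, f.map_update_smul, hν, smul_zero, add_zero]

theorem map_comp_eq_of_map_update_eq_zero [Fintype ι]
    (hν : ∀ Y j, f (Function.update Y j ν) = 0) {P : M → M}
    (hP : ∀ x, ∃ c : R, P x + c • ν = x) (Y : ι → M) :
    f (fun i => P (Y i)) = f Y := by
  suffices h : ∀ s : Finset ι, f (s.piecewise (fun i => P (Y i)) Y) = f Y by
    simpa using h Finset.univ
  intro s
  induction s using Finset.induction_on with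
  | empty => rw [Finset.piecewise_empty]
  | insert j s hj ih =>
    rw [Finset.piecewise_insert, f.map_update_apply_eq_of_map_update_eq_zero hν hP,
      ← ih]
    congr 1
    exact Function.update_eq_self_iff.mpr (Finset.piecewise_eq_of_notMem _ _ _ hj).symm

end MultilinearMap

namespace AlternatingMap

variable {R M N : Type*} [CommRing R] [AddCommGroup M] [Module R M]
  [AddCommGroup N] [Module R N] {n : ℕ}

theorem map_update_eq_zero_of_curryLeft_eq_zero (f : M [⋀^Fin (n + 1)]→ₗ[R] N) {ν : M}
    (h : f.curryLeft ν = 0) (Y : Fin (n + 1) → M) (j : Fin (n + 1)) :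
    f (Function.update Y j ν) = 0 := by
  have hswap : Function.update Y j ν ∘ Equiv.swap 0 j
      = Matrix.vecCons ν (Fin.tail (Y ∘ Equiv.swap 0 j)) := by
    rw [Function.update_comp_equiv, Equiv.symm_swap, Equiv.swap_apply_right]
    conv_lhs => rw [← Fin.cons_self_tail (Y ∘ Equiv.swap 0 j)]
    exact Fin.update_cons_zero _ _ _
  have := f.map_perm (Function.update Y j ν) (Equiv.swap 0 j)
  rwa [hswap, ← curryLeft_apply_apply, h, zero_apply, eq_comm, smul_eq_zero_iff_eq] at this

theorem curryLeft_apply_update_self (f : M [⋀^Fin (n + 1)]→ₗ[R] N) (ν : M) (Y : Fin n → M)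
    (j : Fin n) : f.curryLeft ν (Function.update Y j ν) = 0 :=
  f.map_eq_zero_of_eq _ (i := 0) (j := j.succ) (by simp) (Fin.succ_ne_zero j).symm

end AlternatingMap

/-- The normal part `ω − ω ∘ P` of an alternating `(k+1)`-form (a form of
degree `≥ 1`) vanishes iff the normal trace `γ_ν ω : (X₂,…,X_k) ↦ ω(ν, X₂,…,X_k)` vanishes
on tangential vectors. -/
theorem normal_part_eq_zero_iff_normal_trace_eq_zero
    {E : Type*} [NormedAddCommGroup E] [InnerProductSpace ℝ E]
    (ν : E) (hν : ‖ν‖ = 1) (P : E → E)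
    (hP : ∀ x, P x = x - ⟪x, ν⟫ • ν)
    (k : ℕ) (ω : AlternatingMap ℝ E ℝ (Fin (k + 1))) :
    (∀ Y : Fin (k + 1) → E, ω Y - ω (fun i => P (Y i)) = 0) ↔
      (∀ X : Fin k → E, (∀ i, ⟪X i, ν⟫ = 0) → ω (Fin.cons ν X) = 0) := by
  have hνν : ⟪ν, ν⟫ = 1 := by rw [real_inner_self_eq_norm_sq, hν, one_pow]
  have hPν : P ν = 0 := by rw [hP, hνν, one_smul, sub_self]
  have hP_tangential (x : E) : ⟪P x, ν⟫ = 0 := by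
    rw [hP, inner_sub_left, real_inner_smul_left, hνν, mul_one, sub_self]
  have hdecomp (x : E) : ∃ c : ℝ, P x + c • ν = x := ⟨⟪x, ν⟫, by rw [hP, sub_add_cancel]⟩
  constructor
  · intro hnormal X _
    have hPcons : ω (fun i => P ((Fin.cons ν X : Fin (k + 1) → E) i)) = 0 :=
      ω.map_coord_zero 0 hPν
    simpa only [hPcons, sub_zero] using hnormal (Fin.cons ν X)
  · intro htrace Y
    have hcurry : ω.curryLeft ν = 0 := by
      ext X
      calc ω.curryLeft ν X = ω.curryLeft ν (fun i => P (X i)) :=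
            ((ω.curryLeft ν).toMultilinearMap.map_comp_eq_of_map_update_eq_zero
              (ω.curryLeft_apply_update_self ν) hdecomp X).symm
        _ = 0 := htrace _ fun i => hP_tangential (X i)
    rw [sub_eq_zero]
    exact (ω.toMultilinearMap.map_comp_eq_of_map_update_eq_zero
      (ω.map_update_eq_zero_of_curryLeft_eq_zero hcurry) hdecomp Y).symm
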